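/- (Gessel–Stanton (1.4).) Let n be a natural number, n ≥ 1, and a ∈ ℂ. Then ∑_{k=0}^{n} ((1/2+3a)_k (1/2−3a)_k (−n)_k)/((1/2)_k (−3n)_k · k!) · (3/4)^k = ((1/2−a)_n (1/2+a)_n)/((1/3)_n (2/3)_n). (Note (−3n)_k ≠ 0 for 0 ≤ k ≤ n since n ≥ 1, hence every summand is defined.) -/

import Mathlib

noncomputable def poch (a : ℂ) (k : ℕ) : ℂ := ∏ j ∈ Finset.range k, (a + j)

lemma poch_zero (a : ℂ) : poch a 0 = 1 := by simp [poch]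

lemma poch_succ (a : ℂ) (k : ℕ) : poch a (k+1) = poch a k * (a + k) :=
  Finset.prod_range_succ _ _

lemma poch_succ' (a : ℂ) (k : ℕ) : poch a (k+1) = a * poch (a+1) k := by
  rw [poch, Finset.prod_range_succ', mul_comm]
  simp only [Nat.cast_zero, add_zero, Nat.cast_add, Nat.cast_one]
  congr 1
  exact Finset.prod_congr rfl (fun i _ => by ring)

lemma poch_cast_pos_ne (c : ℝ) (hc : 0 < c) (k : ℕ) : poch (c:ℂ) k ≠ 0 := by
  unfold poch
  refine Finset.prod_ne_zero_iff.2 fun j _ => ?_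
  have h : ((c:ℂ) + j) = ((c + j : ℝ) : ℂ) := by push_cast; ring
  rw [h]
  exact Complex.ofReal_ne_zero.2 (by positivity)

lemma poch_neg_ne {m k : ℕ} (h : k ≤ m) : poch (-(m:ℂ)) k ≠ 0 := by
  unfold poch
  refine Finset.prod_ne_zero_iff.2 fun j hj => ?_
  have hj' : j < m := lt_of_lt_of_le (Finset.mem_range.1 hj) h
  intro hz
  have : (j:ℂ) = (m:ℂ) := by linear_combination hz
  exact absurd (Nat.cast_inj.1 this) (Nat.ne_of_lt hj')

lemma poch_neg_self (n : ℕ) : poch (-(n:ℂ)) (n+1) = 0 :=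
  Finset.prod_eq_zero (Finset.self_mem_range_succ n) (by ring)

lemma lin_ne {k m : ℕ} (h : k ≠ m) : (k:ℂ) - (m:ℂ) ≠ 0 := by
  intro hz
  exact h (Nat.cast_inj.1 (by linear_combination hz))

lemma poch_shift3 (b : ℂ) (k : ℕ) :
    poch (b-3) k * ((b-3+k)*(b-2+k)*(b-1+k)) = (b-3)*(b-2)*(b-1) * poch b k := by
  have e1 : poch (b-3) (k+3) = poch (b-3) k * ((b-3+k)*(b-2+k)*(b-1+k)) := by
    show poch (b-3) (k+1+1+1) = _
    rw [poch_succ, poch_succ, poch_succ]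
    push_cast; ring
  have e2 : poch (b-3) (k+3) = (b-3)*(b-2)*(b-1) * poch b k := by
    show poch (b-3) (k+2+1) = _
    rw [poch_succ', show (k:ℕ)+2 = (k+1)+1 from rfl, poch_succ', poch_succ',
      show b-3+1+1+1 = b by ring]
    ring_nf
  rw [← e1, e2]

noncomputable def Hc (n k : ℕ) : ℂ := if k = 0 then -1/((n:ℂ)+1) else poch (-(n:ℂ)) (k-1)

lemma Hc_succ (n k : ℕ) : Hc n (k+1) = poch (-(n:ℂ)) k := by simp [Hc]

lemma n1_ne (n : ℕ) : ((n:ℂ)+1) ≠ 0 := by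
  have := lin_ne (k := 0) (m := n+1) (by omega)
  intro h; apply this; push_cast; linear_combination -h

lemma poch_neg_eq (n k : ℕ) : poch (-(n:ℂ)) k = ((k:ℂ) - n - 1) * Hc n k := by
  cases k with
  | zero =>
      simp only [Hc, if_pos rfl, poch_zero, Nat.cast_zero, ite_true]
      field_simp [n1_ne n]
      ring
  | succ j =>
      rw [Hc_succ, poch_succ]
      push_cast; ring

lemma poch_negsucc (n k : ℕ) : poch (-(n:ℂ)-1) k = -((n:ℂ)+1) * Hc n k := by
  cases k with
  | zero =>
      simp only [Hc, if_pos rfl, poch_zero, ite_true]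
      field_simp [n1_ne n]
  | succ j =>
      rw [Hc_succ, poch_succ', show -(n:ℂ)-1+1 = -(n:ℂ) by ring]
      ring

noncomputable def Fterm (n : ℕ) (a : ℂ) (k : ℕ) : ℂ :=
  poch (1/2 + 3*a) k * poch (1/2 - 3*a) k * poch (-(n:ℂ)) k /
    (poch (1/2) k * poch (-3*(n:ℂ)) k * (k.factorial : ℂ)) * (3/4:ℂ)^k

noncomputable def Gt (n : ℕ) (a : ℂ) (k : ℕ) : ℂ :=
  (2/27 : ℂ) * k * (3*(2*(n:ℂ)+1)*k - 2*(k:ℂ)^2 - (3*(n:ℂ)+1)) *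
    (poch (1/2 + 3*a) k * poch (1/2 - 3*a) k * Hc n k) /
    (poch (1/2) k * poch (-3*(n:ℂ)) k * (k.factorial : ℂ)) * (3/4:ℂ)^k

set_option maxHeartbeats 1000000 in
lemma wz (n k : ℕ) (hn : 1 ≤ n) (hk : k ≤ n + 1) (a : ℂ) :
    ((n:ℂ)+1/3)*((n:ℂ)+2/3) * Fterm (n+1) a k - (((n:ℂ)+1/2)^2 - a^2) * Fterm n a k
      = Gt n a (k+1) - Gt n a k := by
  have hd1 : poch (1/2 : ℂ) k ≠ 0 := by
    have := poch_cast_pos_ne (1/2) (by norm_num) k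
    rwa [show ((1/2:ℝ):ℂ) = (1/2:ℂ) by norm_num] at this
  have hd2 : poch (-3*(n:ℂ)) k ≠ 0 := by
    have := poch_neg_ne (m := 3*n) (k := k) (by omega)
    rwa [show -((3*n:ℕ):ℂ) = -3*(n:ℂ) by push_cast; ring] at this
  have hf : ((k.factorial : ℂ)) ≠ 0 := Nat.cast_ne_zero.2 k.factorial_ne_zero
  have lne : ∀ m : ℕ, k ≠ m → (k:ℂ) - (m:ℂ) ≠ 0 := fun m h => lin_ne h
  have c1 : (k:ℂ) - 3*n - 1 ≠ 0 := by
    have := lne (3*n+1) (by omega); intro h; apply this; push_cast; linear_combination h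
  have c2 : (k:ℂ) - 3*n - 2 ≠ 0 := by
    have := lne (3*n+2) (by omega); intro h; apply this; push_cast; linear_combination h
  have c3 : (k:ℂ) - 3*n - 3 ≠ 0 := by
    have := lne (3*n+3) (by omega); intro h; apply this; push_cast; linear_combination h
  have c0 : (k:ℂ) - 3*n ≠ 0 := by
    have := lne (3*n) (by omega); intro h; apply this; push_cast; linear_combination h
  have ck1 : ((k:ℂ)+1) ≠ 0 := n1_ne k
  have ckh : ((1:ℂ)/2 + k) ≠ 0 := by
    intro h
    have h2 : ((1+2*k:ℕ):ℂ) = 0 := by push_cast; linear_combination 2*h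
    have := Nat.cast_eq_zero.1 h2
    omega
  have b1 : (-3*(n:ℂ)-1) ≠ 0 := by
    intro h
    have h2 : ((3*n+1:ℕ):ℂ) = 0 := by push_cast; linear_combination -h
    have := Nat.cast_eq_zero.1 h2; omega
  have b2 : (-3*(n:ℂ)-2) ≠ 0 := by
    intro h
    have h2 : ((3*n+2:ℕ):ℂ) = 0 := by push_cast; linear_combination -h
    have := Nat.cast_eq_zero.1 h2; omega
  have b3 : (-3*(n:ℂ)-3) ≠ 0 := by
    intro h
    have h2 : ((3*n+3:ℕ):ℂ) = 0 := by push_cast; linear_combination -h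
    have := Nat.cast_eq_zero.1 h2; omega
  have hP3 : poch (-3*((n:ℂ)+1)) k ≠ 0 := by
    have := poch_neg_ne (m := 3*(n+1)) (k := k) (by omega)
    rwa [show -((3*(n+1):ℕ):ℂ) = -3*((n:ℂ)+1) by push_cast; ring] at this
  have hrel := poch_shift3 (-3*(n:ℂ)) k
  rw [show -3*(n:ℂ)-3 = -3*((n:ℂ)+1) by ring] at hrel
  have e4 : poch (-((n:ℂ)+1)) k = -((n:ℂ)+1) * Hc n k := by
    rw [show -((n:ℂ)+1) = -(n:ℂ)-1 by ring, poch_negsucc n k]; ring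
  -- shorthands (syntactic)
  have e0 : poch (-(n:ℂ)) k = ((k:ℂ) - n - 1) * Hc n k := poch_neg_eq n k
  have h27 : (27:ℂ) * (poch (1/2:ℂ) k * poch (-3*(n:ℂ)) k * (k.factorial:ℂ)) ≠ 0 := by
    exact mul_ne_zero (by norm_num) (mul_ne_zero (mul_ne_zero hd1 hd2) hf)
  have hD : (27:ℂ) * (poch (1/2:ℂ) k * poch (-3*(n:ℂ)) k * (k.factorial:ℂ)) *
      ((1/2 + (k:ℂ)) * (((k:ℂ) - 3*n) * ((k:ℂ)+1))) ≠ 0 := by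
    exact mul_ne_zero h27 (mul_ne_zero ckh (mul_ne_zero c0 ck1))
  -- flatten Fterm (n+1)
  have h1 : ((n:ℂ)+1/3)*((n:ℂ)+2/3) * Fterm (n+1) a k
      = Hc n k * poch (1/2 + 3*a) k * poch (1/2 - 3*a) k * (3/4:ℂ)^k *
          (((k:ℂ)-3*n-1)*((k:ℂ)-3*n-2)*((k:ℂ)-3*n-3)) /
        (27 * (poch (1/2:ℂ) k * poch (-3*(n:ℂ)) k * (k.factorial:ℂ))) := by
    unfold Fterm
    push_cast
    rw [e4]
    set x := (3/4:ℂ)^k with hx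
    set p1 := poch (1/2 + 3*a) k with hp1
    set p2 := poch (1/2 - 3*a) k with hp2
    set d1 := poch (1/2:ℂ) k with hdd1
    set d2 := poch (-3*(n:ℂ)) k with hdd2
    set P3 := poch (-3*((n:ℂ)+1)) k with hPP3
    set hh := Hc n k with hhh
    set f := (k.factorial:ℂ) with hff
    clear_value x p1 p2 d1 d2 P3 hh f
    field_simp
    linear_combination (-9 : ℂ) * (hh*p1*p2*x) * hrel
  have A1 : ((n:ℂ)+1/3)*((n:ℂ)+2/3) * Fterm (n+1) a k
      = Hc n k * poch (1/2 + 3*a) k * poch (1/2 - 3*a) k * (3/4:ℂ)^k *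
          (((k:ℂ)-3*n-1)*((k:ℂ)-3*n-2)*((k:ℂ)-3*n-3)) * ((1/2 + (k:ℂ)) * (((k:ℂ) - 3*n) * ((k:ℂ)+1))) /
        (27 * (poch (1/2:ℂ) k * poch (-3*(n:ℂ)) k * (k.factorial:ℂ)) *
          ((1/2 + (k:ℂ)) * (((k:ℂ) - 3*n) * ((k:ℂ)+1)))) := by
    rw [h1, div_eq_div_iff h27 hD]
    ring
  have A2 : (((n:ℂ)+1/2)^2 - a^2) * Fterm n a k
      = 27 * (Hc n k * poch (1/2 + 3*a) k * poch (1/2 - 3*a) k * (3/4:ℂ)^k) *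
          ((((n:ℂ)+1/2)^2 - a^2) * ((k:ℂ)-n-1)) * ((1/2 + (k:ℂ)) * (((k:ℂ) - 3*n) * ((k:ℂ)+1))) /
        (27 * (poch (1/2:ℂ) k * poch (-3*(n:ℂ)) k * (k.factorial:ℂ)) *
          ((1/2 + (k:ℂ)) * (((k:ℂ) - 3*n) * ((k:ℂ)+1)))) := by
    unfold Fterm
    rw [e0, div_mul_eq_mul_div, ← mul_div_assoc,
      div_eq_div_iff (by apply_rules [mul_ne_zero, hd1, hd2, hf]) hD]
    ring
  have A3 : Gt n a (k+1)
      = 2*((k:ℂ)+1)*(3*(2*(n:ℂ)+1)*((k:ℂ)+1) - 2*((k:ℂ)+1)^2 - (3*(n:ℂ)+1)) *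
          (poch (1/2 + 3*a) k * poch (1/2 - 3*a) k) * ((1/2+3*a+(k:ℂ))*(1/2-3*a+(k:ℂ))) *
          (((k:ℂ)-n-1) * Hc n k) * (3/4:ℂ)^k * (3/4) /
        (27 * (poch (1/2:ℂ) k * poch (-3*(n:ℂ)) k * (k.factorial:ℂ)) *
          ((1/2 + (k:ℂ)) * (((k:ℂ) - 3*n) * ((k:ℂ)+1)))) := by
    unfold Gt
    rw [Hc_succ, e0, poch_succ (1/2 + 3*a), poch_succ (1/2 - 3*a),
      poch_succ (1/2), poch_succ (-3*(n:ℂ)), Nat.factorial_succ, pow_succ]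
    push_cast
    have c0' : (-3*(n:ℂ) + k) ≠ 0 := fun h => c0 (by linear_combination h)
    rw [div_mul_eq_mul_div,
      div_eq_div_iff (by apply_rules [mul_ne_zero, hd1, hd2, hf, ck1, ckh, c0']) hD]
    ring
  have A4 : Gt n a k
      = 2*(k:ℂ)*(3*(2*(n:ℂ)+1)*(k:ℂ) - 2*(k:ℂ)^2 - (3*(n:ℂ)+1)) *
          (Hc n k * poch (1/2 + 3*a) k * poch (1/2 - 3*a) k * (3/4:ℂ)^k) *
          ((1/2 + (k:ℂ)) * (((k:ℂ) - 3*n) * ((k:ℂ)+1))) /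
        (27 * (poch (1/2:ℂ) k * poch (-3*(n:ℂ)) k * (k.factorial:ℂ)) *
          ((1/2 + (k:ℂ)) * (((k:ℂ) - 3*n) * ((k:ℂ)+1)))) := by
    unfold Gt
    rw [eq_div_iff hD]
    set x := (3/4:ℂ)^k with hx
    set p1 := poch (1/2 + 3*a) k with hp1
    set p2 := poch (1/2 - 3*a) k with hp2
    set d1 := poch (1/2:ℂ) k with hdd1
    set d2 := poch (-3*(n:ℂ)) k with hdd2
    set hh := Hc n k with hhh
    set f := (k.factorial:ℂ) with hff
    clear_value x p1 p2 d1 d2 hh f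
    field_simp [hd1, hd2, hf, ckh, c0, ck1]
  rw [A1, A2, A3, A4, div_sub_div_same, div_sub_div_same]
  congr 1
  ring

lemma Gt_zero (n : ℕ) (a : ℂ) : Gt n a 0 = 0 := by simp [Gt]

lemma Gt_top (n : ℕ) (a : ℂ) : Gt n a (n+2) = 0 := by
  have : Hc n (n+2) = 0 := by
    rw [show n+2 = (n+1)+1 from rfl, Hc_succ, poch_neg_self]
  simp [Gt, this]

lemma Fterm_top (n : ℕ) (a : ℂ) : Fterm n a (n+1) = 0 := by
  simp [Fterm, poch_neg_self]

lemma step (n : ℕ) (hn : 1 ≤ n) (a : ℂ) :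
    ((n:ℂ)+1/3)*((n:ℂ)+2/3) * ∑ k ∈ Finset.range (n+2), Fterm (n+1) a k
      = (((n:ℂ)+1/2)^2 - a^2) * ∑ k ∈ Finset.range (n+2), Fterm n a k := by
  rw [← sub_eq_zero, Finset.mul_sum, Finset.mul_sum, ← Finset.sum_sub_distrib]
  have h : ∀ k ∈ Finset.range (n+2),
      ((n:ℂ)+1/3)*((n:ℂ)+2/3) * Fterm (n+1) a k - (((n:ℂ)+1/2)^2 - a^2) * Fterm n a k
        = Gt n a (k+1) - Gt n a k := fun k hk =>
    wz n k hn (by have := Finset.mem_range.1 hk; omega) a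
  rw [Finset.sum_congr rfl h, Finset.sum_range_sub (Gt n a), Gt_top, Gt_zero, sub_zero]

lemma natlin_ne (n p q : ℕ) (hq : 0 < q) (c : ℂ) (hc : c = (p:ℂ)/q) (hp : 0 < p) :
    (n:ℂ) + c ≠ 0 := by
  intro h
  have h2 : ((q*n+p:ℕ):ℂ) = 0 := by
    push_cast
    rw [hc] at h
    have hq' : (q:ℂ) ≠ 0 := Nat.cast_ne_zero.2 (by omega)
    field_simp at h
    linear_combination h
  have := Nat.cast_eq_zero.1 h2
  omega

lemma main (n : ℕ) (hn : 1 ≤ n) (a : ℂ) :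
    ∑ k ∈ Finset.range (n+1), Fterm n a k
      = poch (1/2 - a) n * poch (1/2 + a) n / (poch (1/3) n * poch (2/3) n) := by
  induction n, hn using Nat.le_induction with
  | base =>
      norm_num [Fterm, poch, Finset.sum_range_succ]
      ring
  | succ n hn ih =>
      have hq1 : poch (1/3:ℂ) n ≠ 0 := by
        have := poch_cast_pos_ne (1/3) (by norm_num) n
        rwa [show ((1/3:ℝ):ℂ) = (1/3:ℂ) by norm_num] at this
      have hq2 : poch (2/3:ℂ) n ≠ 0 := by
        have := poch_cast_pos_ne (2/3) (by norm_num) n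
        rwa [show ((2/3:ℝ):ℂ) = (2/3:ℂ) by norm_num] at this
      have l13 : (1/3:ℂ) + n ≠ 0 := by
        have := natlin_ne n 1 3 (by norm_num) (1/3:ℂ) (by norm_num) (by norm_num)
        intro h; exact this (by linear_combination h)
      have l23 : (2/3:ℂ) + n ≠ 0 := by
        have := natlin_ne n 2 3 (by norm_num) (2/3:ℂ) (by norm_num) (by norm_num)
        intro h; exact this (by linear_combination h)
      have b13 : ((n:ℂ)+1/3) ≠ 0 := fun h => l13 (by linear_combination h)
      have b23 : ((n:ℂ)+2/3) ≠ 0 := fun h => l23 (by linear_combination h)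
      have hBne : ((n:ℂ)+1/3)*((n:ℂ)+2/3) ≠ 0 := mul_ne_zero b13 b23
      have hsum : ∑ k ∈ Finset.range (n+2), Fterm n a k
          = poch (1/2 - a) n * poch (1/2 + a) n / (poch (1/3) n * poch (2/3) n) := by
        rw [Finset.sum_range_succ, Fterm_top, add_zero, ih]
      have key : (((n:ℂ)+1/2)^2 - a^2) *
            (poch (1/2 - a) n * poch (1/2 + a) n / (poch (1/3) n * poch (2/3) n))
          = ((n:ℂ)+1/3)*((n:ℂ)+2/3) *
            (poch (1/2 - a) (n+1) * poch (1/2 + a) (n+1) / (poch (1/3) (n+1) * poch (2/3) (n+1))) := by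
        rw [poch_succ (1/2 - a), poch_succ (1/2 + a), poch_succ (1/3), poch_succ (2/3),
          ← mul_div_assoc, ← mul_div_assoc,
          div_eq_div_iff (mul_ne_zero hq1 hq2)
            (mul_ne_zero (mul_ne_zero hq1 l13) (mul_ne_zero hq2 l23))]
        ring
      exact mul_left_cancel₀ hBne (by rw [step n hn a, hsum, key])

/-- Gessel–Stanton (1.4). -/
theorem gessel_stanton_1_4 (n : ℕ) (hn : 1 ≤ n) (a : ℂ) :
    ∑ k ∈ Finset.range (n + 1),
        poch (1 / 2 + 3 * a) k * poch (1 / 2 - 3 * a) k * poch (-(n : ℂ)) k /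
          (poch (1 / 2) k * poch (-3 * (n : ℂ)) k * (k.factorial : ℂ)) *
          (3 / 4 : ℂ) ^ k
      = poch (1 / 2 - a) n * poch (1 / 2 + a) n /
          (poch (1 / 3) n * poch (2 / 3) n) := by
  exact main n hn a
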